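/- arXiv:2208.10735 — 4 statements merged into one kernel-verified Lean document; each statement's English description precedes it below -/
import Mathlib

section
/- Let a₁ be a real number and T > 0. Define g₁(t) = (1 + (a₁ − 1)e^{a₁(t−T)})/a₁ for a₁ ≠ 0 and g₁(t) = T + 1 − t for a₁ = 0. Then g₁(t) ≥ min(1, e^{−|a₁| T}/max(a₁,1)) > 0 for all t ∈ [0,T]; in particular g₁ is strictly positive on [0,T]. -/
open Real Set

/-- Positivity lower bound for `g₁` on `[0,T]`. -/
theorem stmt_1 (a₁ T : ℝ) (hT : 0 < T) (g₁ : ℝ → ℝ)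
    (hg : ∀ t, g₁ t = if a₁ = 0 then T + 1 - t
      else (1 + (a₁ - 1) * Real.exp (a₁ * (t - T))) / a₁) :
    (0 < min 1 (Real.exp (-|a₁| * T) / max a₁ 1)) ∧
    (∀ t ∈ Set.Icc (0 : ℝ) T, g₁ t ≥ min 1 (Real.exp (-|a₁| * T) / max a₁ 1)) ∧
    (∀ t ∈ Set.Icc (0 : ℝ) T, 0 < g₁ t) := by
  have hmaxpos : (0:ℝ) < max a₁ 1 := lt_of_lt_of_le one_pos (le_max_right _ _)
  have hm : 0 < min 1 (Real.exp (-|a₁| * T) / max a₁ 1) :=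
    lt_min one_pos (div_pos (Real.exp_pos _) hmaxpos)
  have hbound : ∀ t ∈ Set.Icc (0 : ℝ) T,
      g₁ t ≥ min 1 (Real.exp (-|a₁| * T) / max a₁ 1) := by
    intro t ht
    obtain ⟨ht0, htT⟩ := ht
    rw [hg]
    by_cases h0 : a₁ = 0
    · rw [if_pos h0]
      calc min 1 (Real.exp (-|a₁| * T) / max a₁ 1) ≤ 1 := min_le_left _ _
        _ ≤ T + 1 - t := by linarith
    · rw [if_neg h0]
      rcases lt_or_ge a₁ 1 with h1 | h1
      · have key : (1:ℝ) ≤ (1 + (a₁ - 1) * Real.exp (a₁ * (t - T))) / a₁ := by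
          rcases lt_or_gt_of_ne h0 with hneg | hpos
          · rw [le_div_iff_of_neg hneg]
            have hu : 1 ≤ Real.exp (a₁ * (t - T)) := by
              rw [← Real.exp_zero]
              apply Real.exp_le_exp.mpr
              nlinarith
            nlinarith
          · rw [le_div_iff₀ hpos]
            have hu : Real.exp (a₁ * (t - T)) ≤ 1 := by
              rw [← Real.exp_zero]
              apply Real.exp_le_exp.mpr
              nlinarith
            nlinarith
        exact le_trans (min_le_left _ _) key
      · have hpos : (0:ℝ) < a₁ := lt_of_lt_of_le one_pos h1
        have habs : |a₁| = a₁ := abs_of_pos hpos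
        have hu : Real.exp (-(a₁ * T)) ≤ Real.exp (a₁ * (t - T)) := by
          apply Real.exp_le_exp.mpr; nlinarith
        have he1 : Real.exp (-(a₁ * T)) ≤ 1 := by
          rw [← Real.exp_zero]; apply Real.exp_le_exp.mpr; nlinarith
        have key : Real.exp (-(a₁ * T)) ≤
            (1 + (a₁ - 1) * Real.exp (a₁ * (t - T))) / a₁ := by
          rw [le_div_iff₀ hpos]
          nlinarith [Real.exp_pos (-(a₁ * T))]
        refine le_trans (le_trans (min_le_right _ _) ?_) key
        rw [habs, neg_mul]
        calc Real.exp (-(a₁ * T)) / max a₁ 1 ≤ Real.exp (-(a₁ * T)) / 1 := by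
              apply div_le_div_of_nonneg_left (Real.exp_pos _).le one_pos (le_max_right _ _)
          _ = Real.exp (-(a₁ * T)) := div_one _
  exact ⟨hm, hbound, fun t ht => lt_of_lt_of_le hm (hbound t ht)⟩
end

section
/- Let a₄ > 0, a₆ < 0 and a₅ ∈ ℝ, so that a₅² − 4a₄a₆ > 0, and let a₃ < 0 < a₂ be the roots of a₄x² + a₅x + a₆ = 0. If g₃ : [0,T] → ℝ is continuously differentiable and satisfies g₃' + a₄g₃² + a₅g₃ + a₆ = 0 with g₃(T) = 0, then a₃ < g₃(t) ≤ 0 for all t ∈ [0,T]. -/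
open Real Set

/-- If a solution of `g' = -a₄ (g - r)(g - r')` touches the equilibrium `r` at some
time `t₁ ∈ [0, T]`, then it equals `r` at time `T` as well (forward uniqueness via Grönwall). -/
lemma riccati_no_touch (a₄ r r' T t₁ : ℝ) (ha₄ : 0 < a₄) (g : ℝ → ℝ)
    (hderiv : ∀ t ∈ Set.Icc (0 : ℝ) T, HasDerivAt g (-a₄ * (g t - r) * (g t - r')) t)
    (hcont : ContinuousOn g (Set.Icc (0 : ℝ) T))
    (ht₁ : t₁ ∈ Set.Icc (0 : ℝ) T) (h0 : g t₁ = r) : g T = r := by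
  obtain ⟨ht₁0, ht₁T⟩ := ht₁
  have hsub : Set.Icc t₁ T ⊆ Set.Icc (0 : ℝ) T := Set.Icc_subset_Icc ht₁0 le_rfl
  obtain ⟨C, hC⟩ := isCompact_Icc.exists_bound_of_continuousOn hcont
  set K : ℝ := a₄ * (C + |r'|) with hK
  have key := norm_le_gronwallBound_of_norm_deriv_right_le (f := fun t => g t - r)
    (f' := fun t => -a₄ * (g t - r) * (g t - r')) (δ := 0) (K := K) (ε := 0)
    (a := t₁) (b := T)
    ((hcont.mono hsub).sub continuousOn_const)
    (fun t ht => ((hderiv t (hsub (Set.mem_Icc_of_Ico ht))).sub_const r).hasDerivWithinAt)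
    (by simp [h0])
    ?_ T ⟨ht₁T, le_rfl⟩
  · rw [gronwallBound_ε0_δ0] at key
    have : g T - r = 0 := by
      have := norm_nonneg (g T - r)
      have h := le_antisymm key this
      simpa [norm_eq_abs, abs_eq_zero] using key.antisymm (norm_nonneg _)
    linarith
  · intro t ht
    have htI : t ∈ Set.Icc (0 : ℝ) T := hsub (Set.mem_Icc_of_Ico ht)
    have hgC : ‖g t‖ ≤ C := hC t htI
    have h1 : |g t - r'| ≤ C + |r'| := by
      calc |g t - r'| ≤ |g t| + |r'| := abs_sub _ _
        _ ≤ C + |r'| := by simpa [norm_eq_abs] using add_le_add_right hgC |r'|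
    have h2 : ‖-a₄ * (g t - r) * (g t - r')‖ = a₄ * |g t - r'| * ‖g t - r‖ := by
      simp [norm_eq_abs, abs_mul, abs_of_pos ha₄]
      ring
    rw [h2, add_zero, hK]
    have hKb : a₄ * |g t - r'| ≤ a₄ * (C + |r'|) :=
      mul_le_mul_of_nonneg_left h1 ha₄.le
    exact mul_le_mul_of_nonneg_right hKb (norm_nonneg _)

/-- Bound `a₃ < g₃ ≤ 0` on the Riccati solution (Case 1, `γ > 1`). -/
theorem stmt_6 (a₄ a₅ a₆ a₂ a₃ T : ℝ) (ha₄ : 0 < a₄) (ha₆ : a₆ < 0) (hT : 0 < T)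
    (hroot₂ : a₄ * a₂ ^ 2 + a₅ * a₂ + a₆ = 0)
    (hroot₃ : a₄ * a₃ ^ 2 + a₅ * a₃ + a₆ = 0)
    (ha₃neg : a₃ < 0) (ha₂pos : 0 < a₂)
    (g₃ : ℝ → ℝ)
    (hderiv : ∀ t ∈ Set.Icc (0 : ℝ) T,
      HasDerivAt g₃ (-(a₄ * (g₃ t) ^ 2 + a₅ * g₃ t + a₆)) t)
    (hcont : ContinuousOn g₃ (Set.Icc (0 : ℝ) T))
    (hterm : g₃ T = 0) :
    ∀ t ∈ Set.Icc (0 : ℝ) T, a₃ < g₃ t ∧ g₃ t ≤ 0 := by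
  have hTmem : T ∈ Set.Icc (0 : ℝ) T := ⟨hT.le, le_rfl⟩
  -- Vieta relations
  have hne : a₂ - a₃ ≠ 0 := by linarith
  have h5 : a₄ * (a₂ + a₃) + a₅ = 0 := by
    have h1 : (a₂ - a₃) * (a₄ * (a₂ + a₃) + a₅) = 0 := by linear_combination hroot₂ - hroot₃
    rcases mul_eq_zero.1 h1 with h | h
    · exact absurd h hne
    · exact h
  have h6 : a₆ = a₄ * a₂ * a₃ := by linear_combination hroot₂ - a₂ * h5
  have hfactor : ∀ x : ℝ, -(a₄ * x ^ 2 + a₅ * x + a₆) = -a₄ * (x - a₂) * (x - a₃) := by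
    intro x; linear_combination (-x) * h5 - h6
  have hderiv₂ : ∀ t ∈ Set.Icc (0 : ℝ) T,
      HasDerivAt g₃ (-a₄ * (g₃ t - a₂) * (g₃ t - a₃)) t := by
    intro t ht
    have := hderiv t ht
    rwa [hfactor (g₃ t)] at this
  have hderiv₃ : ∀ t ∈ Set.Icc (0 : ℝ) T,
      HasDerivAt g₃ (-a₄ * (g₃ t - a₃) * (g₃ t - a₂)) t := by
    intro t ht
    have := hderiv₂ t ht
    rwa [show -a₄ * (g₃ t - a₂) * (g₃ t - a₃) = -a₄ * (g₃ t - a₃) * (g₃ t - a₂) by ring] at this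
  -- strict lower bound
  have hlow : ∀ t ∈ Set.Icc (0 : ℝ) T, a₃ < g₃ t := by
    intro t ht
    by_contra hle
    push_neg at hle
    have hmem : a₃ ∈ Set.Icc (g₃ t) (g₃ T) := ⟨hle, by rw [hterm]; linarith⟩
    obtain ⟨t₁, ht₁, hgt₁⟩ := intermediate_value_Icc ht.2 (hcont.mono (Set.Icc_subset_Icc ht.1 le_rfl)) hmem
    have ht₁I : t₁ ∈ Set.Icc (0 : ℝ) T := ⟨le_trans ht.1 ht₁.1, ht₁.2⟩
    have := riccati_no_touch a₄ a₃ a₂ T t₁ ha₄ g₃ hderiv₃ hcont ht₁I hgt₁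
    rw [hterm] at this
    linarith
  -- strict upper bound by a₂
  have hupA : ∀ t ∈ Set.Icc (0 : ℝ) T, g₃ t < a₂ := by
    intro t ht
    by_contra hle
    push_neg at hle
    have hmem : a₂ ∈ Set.Icc (g₃ T) (g₃ t) := ⟨by rw [hterm]; linarith, hle⟩
    obtain ⟨t₁, ht₁, hgt₁⟩ := intermediate_value_Icc' ht.2 (hcont.mono (Set.Icc_subset_Icc ht.1 le_rfl)) hmem
    have ht₁I : t₁ ∈ Set.Icc (0 : ℝ) T := ⟨le_trans ht.1 ht₁.1, ht₁.2⟩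
    have := riccati_no_touch a₄ a₂ a₃ T t₁ ha₄ g₃ hderiv₂ hcont ht₁I hgt₁
    rw [hterm] at this
    linarith
  -- strict monotonicity
  have hmono : StrictMonoOn g₃ (Set.Icc (0 : ℝ) T) := by
    apply strictMonoOn_of_deriv_pos (convex_Icc 0 T) hcont
    intro x hx
    rw [interior_Icc] at hx
    have hxI : x ∈ Set.Icc (0 : ℝ) T := Set.mem_Icc_of_Ioo hx
    rw [(hderiv₂ x hxI).deriv]
    have h1 : g₃ x - a₂ < 0 := by linarith [hupA x hxI]
    have h2 : 0 < g₃ x - a₃ := by linarith [hlow x hxI]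
    have heq : -a₄ * (g₃ x - a₂) * (g₃ x - a₃) = a₄ * ((a₂ - g₃ x) * (g₃ x - a₃)) := by ring
    have hpos : 0 < a₄ * ((a₂ - g₃ x) * (g₃ x - a₃)) :=
      mul_pos ha₄ (mul_pos (by linarith) h2)
    linarith
  intro t ht
  refine ⟨hlow t ht, ?_⟩
  rcases eq_or_lt_of_le ht.2 with h | h
  · rw [h, hterm]
  · have := hmono ht hTmem h
    rw [hterm] at this
    linarith
end

section
/- With the notation of the previous statement, the value of F at the critical point is a quadratic polynomial in g: F(π*, φ₁*, φ₂*) = 𝔉₁g² + 𝔉₂g + 𝔉₃, where 𝔉₁ = σ²ρ²(1−γ−θ)²/(2(1−γ)(γ+θ)) − σ²θ/(2(1−γ)), 𝔉₂ = σρμ₂(1−γ−θ)/(γ+θ), and 𝔉₃ = (1−γ)μ₂²/(2(γ+θ)). -/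
/- The square root enters only through `√(1 - ρ²) * φ₂*` and `φ₂*²`, both multiples of
`(√(1 - ρ²))² = 1 - ρ²`; after substituting this, the claim is an identity of rational
functions. Each division by `θ` meets a factor `θ²` from `φ₁*²` or `φ₂*²`, so only
`1 - γ` and `γ + θ` must be nonzero. -/

theorem hamiltonian_eq_of_critical_point {γ θ σ ρ μ₂ g s π φ₁ φ₂ : ℝ} (hγ : 1 - γ ≠ 0)
    (hγθ : γ + θ ≠ 0) (hs : s ^ 2 = 1 - ρ ^ 2)
    (hπ : π = (σ * ρ * (1 - γ - θ) * g + μ₂ * (1 - γ)) / ((1 - γ) * (γ + θ)))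
    (hφ₁ : φ₁ = -θ * (σ * ρ * g + μ₂ * (1 - γ)) / ((1 - γ) * (γ + θ)))
    (hφ₂ : φ₂ = -σ * θ * s * g / (1 - γ)) :
    γ * (γ - 1) / 2 * π ^ 2 + σ * ρ * (1 - γ) * g * π + (1 - γ) * μ₂ * π +
      (1 - γ) * φ₁ * π + σ * ρ * φ₁ * g + σ * s * φ₂ * g +
      (1 - γ) / (2 * θ) * φ₁ ^ 2 + (1 - γ) / (2 * θ) * φ₂ ^ 2 =
      (σ ^ 2 * ρ ^ 2 * (1 - γ - θ) ^ 2 / (2 * (1 - γ) * (γ + θ)) -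
        σ ^ 2 * θ / (2 * (1 - γ))) * g ^ 2 +
      (σ * ρ * μ₂ * (1 - γ - θ) / (γ + θ)) * g +
      (1 - γ) * μ₂ ^ 2 / (2 * (γ + θ)) := by
  subst hπ hφ₁ hφ₂
  field_simp
  rw [hs]
  ring

theorem stmt_8_general (γ θ σ ρ μ₂ g : ℝ) (hγ : 0 < γ) (hγ1 : γ ≠ 1) (hθ : 0 < θ)
    (hρ : ρ ∈ Set.Icc (-1 : ℝ) 1)
    (F : ℝ → ℝ → ℝ → ℝ)
    (hF : ∀ π φ₁ φ₂, F π φ₁ φ₂ =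
      γ * (γ - 1) / 2 * π ^ 2 + σ * ρ * (1 - γ) * g * π + (1 - γ) * μ₂ * π +
      (1 - γ) * φ₁ * π + σ * ρ * φ₁ * g + σ * Real.sqrt (1 - ρ ^ 2) * φ₂ * g +
      (1 - γ) / (2 * θ) * φ₁ ^ 2 + (1 - γ) / (2 * θ) * φ₂ ^ 2)
    (πs φ₁s φ₂s : ℝ)
    (hπs : πs = (σ * ρ * (1 - γ - θ) * g + μ₂ * (1 - γ)) / ((1 - γ) * (γ + θ)))
    (hφ₁s : φ₁s = -θ * (σ * ρ * g + μ₂ * (1 - γ)) / ((1 - γ) * (γ + θ)))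
    (hφ₂s : φ₂s = -σ * θ * Real.sqrt (1 - ρ ^ 2) * g / (1 - γ)) :
    F πs φ₁s φ₂s =
      (σ ^ 2 * ρ ^ 2 * (1 - γ - θ) ^ 2 / (2 * (1 - γ) * (γ + θ)) -
        σ ^ 2 * θ / (2 * (1 - γ))) * g ^ 2 +
      (σ * ρ * μ₂ * (1 - γ - θ) / (γ + θ)) * g +
      (1 - γ) * μ₂ ^ 2 / (2 * (γ + θ)) := by
  have hρ_sq : ρ ^ 2 ≤ 1 := sq_le_one_iff_abs_le_one ρ |>.mpr (abs_le.mpr hρ)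
  rw [hF]
  exact hamiltonian_eq_of_critical_point (sub_ne_zero.mpr hγ1.symm) (by positivity)
    (Real.sq_sqrt (sub_nonneg.mpr hρ_sq)) hπs hφ₁s hφ₂s

/-- Value of the Hamiltonian `F` at its critical point, as a quadratic in `g`. -/
theorem stmt_8 (γ θ σ ρ μ₂ g : ℝ) (hγ : 0 < γ) (hγ1 : γ ≠ 1) (hθ : 0 < θ)
    (hσ : 0 < σ) (hρ : ρ ∈ Set.Icc (-1 : ℝ) 1)
    (F : ℝ → ℝ → ℝ → ℝ)
    (hF : ∀ π φ₁ φ₂, F π φ₁ φ₂ =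
      γ * (γ - 1) / 2 * π ^ 2 + σ * ρ * (1 - γ) * g * π + (1 - γ) * μ₂ * π +
      (1 - γ) * φ₁ * π + σ * ρ * φ₁ * g + σ * Real.sqrt (1 - ρ ^ 2) * φ₂ * g +
      (1 - γ) / (2 * θ) * φ₁ ^ 2 + (1 - γ) / (2 * θ) * φ₂ ^ 2)
    (πs φ₁s φ₂s : ℝ)
    (hπs : πs = (σ * ρ * (1 - γ - θ) * g + μ₂ * (1 - γ)) / ((1 - γ) * (γ + θ)))
    (hφ₁s : φ₁s = -θ * (σ * ρ * g + μ₂ * (1 - γ)) / ((1 - γ) * (γ + θ)))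
    (hφ₂s : φ₂s = -σ * θ * Real.sqrt (1 - ρ ^ 2) * g / (1 - γ)) :
    F πs φ₁s φ₂s =
      (σ ^ 2 * ρ ^ 2 * (1 - γ - θ) ^ 2 / (2 * (1 - γ) * (γ + θ)) -
        σ ^ 2 * θ / (2 * (1 - γ))) * g ^ 2 +
      (σ * ρ * μ₂ * (1 - γ - θ) / (γ + θ)) * g +
      (1 - γ) * μ₂ ^ 2 / (2 * (γ + θ)) :=
  stmt_8_general γ θ σ ρ μ₂ g hγ hγ1 hθ hρ F hF πs φ₁s φ₂s hπs hφ₁s hφ₂s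
end

section
/- Let a₄ > 0, a₅ ∈ ℝ, a₆ ≥ 0 with a₅² − 4a₄a₆ > 0 and a₅ < 0, so the two roots a₂ > a₃ ≥ 0 of a₄x² + a₅x + a₆ = 0 are nonnegative. If g₃ : [0,T] → ℝ is continuously differentiable and satisfies g₃' + a₄g₃² + a₅g₃ + a₆ = 0 with g₃(T) = 0, then 0 ≤ g₃(t) < a₂ for all t ∈ [0,T]. -/
open Real Set

/-- Bound `0 ≤ g₃ < a₂` on the Riccati solution (Case 4, `γ + θ < 1`). -/
theorem stmt_17 (a₄ a₅ a₆ a₂ a₃ T : ℝ) (ha₄ : 0 < a₄) (ha₅ : a₅ < 0) (ha₆ : 0 ≤ a₆)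
    (hdisc : 0 < a₅ ^ 2 - 4 * a₄ * a₆) (hT : 0 < T)
    (hroot₂ : a₄ * a₂ ^ 2 + a₅ * a₂ + a₆ = 0)
    (hroot₃ : a₄ * a₃ ^ 2 + a₅ * a₃ + a₆ = 0)
    (horder : a₃ < a₂) (ha₃nonneg : 0 ≤ a₃)
    (g₃ : ℝ → ℝ)
    (hderiv : ∀ t ∈ Set.Icc (0 : ℝ) T,
      HasDerivAt g₃ (-(a₄ * (g₃ t) ^ 2 + a₅ * g₃ t + a₆)) t)
    (hcont : ContinuousOn g₃ (Set.Icc (0 : ℝ) T))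
    (hterm : g₃ T = 0) :
    ∀ t ∈ Set.Icc (0 : ℝ) T, 0 ≤ g₃ t ∧ g₃ t < a₂ := by
  -- algebraic facts about the roots
  have hsum : a₄ * (a₂ + a₃) + a₅ = 0 := by
    have h1 : (a₂ - a₃) * (a₄ * (a₂ + a₃) + a₅) = 0 := by
      linear_combination hroot₂ - hroot₃
    have h2 : a₂ - a₃ ≠ 0 := by linarith
    rcases mul_eq_zero.mp h1 with h | h
    · exact absurd h h2
    · exact h
  have hprod : a₆ = a₄ * a₂ * a₃ := by linear_combination hroot₂ - a₂ * hsum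
  have hfact : ∀ x : ℝ, a₄ * x ^ 2 + a₅ * x + a₆ = a₄ * (x - a₃) * (x - a₂) := by
    intro x
    linear_combination x * hsum + hroot₂ - a₂ * hsum
  -- the clamped version of g₃, continuous on all of ℝ
  set gc : ℝ → ℝ := fun s => g₃ (max 0 (min s T)) with hgc_def
  have hclamp_mem : ∀ s : ℝ, max 0 (min s T) ∈ Set.Icc (0:ℝ) T := by
    intro s
    constructor
    · exact le_max_left _ _
    · exact max_le hT.le (min_le_right _ _)
  have hgc_cont : Continuous gc :=
    hcont.comp_continuous (continuous_const.max (continuous_id.min continuous_const)) hclamp_mem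
  have hgc_eq : ∀ t ∈ Set.Icc (0:ℝ) T, gc t = g₃ t := by
    intro t ht
    simp only [hgc_def]
    rw [min_eq_left ht.2, max_eq_right ht.1]
  ------------------------------------------------------------------
  -- Upper bound: g₃ t ≤ a₃ (< a₂), via integrating factor
  ------------------------------------------------------------------
  -- L s = -a₄ * (gc s - a₂)
  set L : ℝ → ℝ := fun s => -a₄ * (gc s - a₂) with hL_def
  have hL_cont : Continuous L := (continuous_const.mul (hgc_cont.sub continuous_const))
  set I : ℝ → ℝ := fun t => ∫ s in (0:ℝ)..t, L s with hI_def
  have hI : ∀ t : ℝ, HasDerivAt I (L t) t := by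
    intro t
    exact intervalIntegral.integral_hasDerivAt_right
      (hL_cont.intervalIntegrable 0 t)
      (hL_cont.stronglyMeasurableAtFilter _ _)
      hL_cont.continuousAt
  have hI_cont : Continuous I := by
    rw [continuous_iff_continuousAt]
    exact fun t => (hI t).continuousAt
  set G : ℝ → ℝ := fun t => (g₃ t - a₃) * Real.exp (-(I t)) with hG_def
  have hG_cont : ContinuousOn G (Set.Icc 0 T) :=
    (hcont.sub continuousOn_const).mul
      ((Real.continuous_exp.comp hI_cont.neg).continuousOn)
  have hG_deriv : ∀ t ∈ Set.Icc (0:ℝ) T, HasDerivAt G 0 t := by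
    intro t ht
    have hexp : HasDerivAt (fun t => Real.exp (-(I t))) (Real.exp (-(I t)) * (-(L t))) t :=
      ((hI t).neg).exp
    have hmul := ((hderiv t ht).sub_const a₃).mul hexp
    refine hmul.congr_deriv ?_
    have hgce := hgc_eq t ht
    simp only [hL_def, hgce]
    rw [hfact (g₃ t)]
    ring
  have hG_const : ∀ t ∈ Set.Icc (0:ℝ) T, G t = G 0 := by
    apply constant_of_has_deriv_right_zero hG_cont
    intro t ht
    exact (hG_deriv t (Set.mem_Icc_of_Ico ht)).hasDerivWithinAt
  have hupper : ∀ t ∈ Set.Icc (0:ℝ) T, g₃ t ≤ a₃ := by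
    intro t ht
    have hGt : G t = G T := by
      rw [hG_const t ht, hG_const T (Set.right_mem_Icc.mpr hT.le)]
    have hGT : G T = -a₃ * Real.exp (-(I T)) := by
      simp [hG_def, hterm]
    have hGT_le : G T ≤ 0 := by
      rw [hGT]
      have := Real.exp_pos (-(I T))
      nlinarith
    have h1 : (g₃ t - a₃) * Real.exp (-(I t)) ≤ 0 := by
      show G t ≤ 0
      rw [hGt]; exact hGT_le
    nlinarith [Real.exp_pos (-(I t))]
  ------------------------------------------------------------------
  -- Lower bound: 0 ≤ g₃ t, via integrating factor + antitone
  ------------------------------------------------------------------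
  set M : ℝ → ℝ := fun s => -a₄ * gc s - a₅ with hM_def
  have hM_cont : Continuous M := (continuous_const.mul hgc_cont).sub continuous_const
  set J : ℝ → ℝ := fun t => ∫ s in (0:ℝ)..t, M s with hJ_def
  have hJ : ∀ t : ℝ, HasDerivAt J (M t) t := by
    intro t
    exact intervalIntegral.integral_hasDerivAt_right
      (hM_cont.intervalIntegrable 0 t)
      (hM_cont.stronglyMeasurableAtFilter _ _)
      hM_cont.continuousAt
  have hJ_cont : Continuous J := by
    rw [continuous_iff_continuousAt]
    exact fun t => (hJ t).continuousAt
  set H : ℝ → ℝ := fun t => g₃ t * Real.exp (-(J t)) with hH_def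
  have hH_cont : ContinuousOn H (Set.Icc 0 T) :=
    hcont.mul ((Real.continuous_exp.comp hJ_cont.neg).continuousOn)
  have hH_deriv : ∀ t ∈ Set.Icc (0:ℝ) T,
      HasDerivAt H (-a₆ * Real.exp (-(J t))) t := by
    intro t ht
    have hexp : HasDerivAt (fun t => Real.exp (-(J t))) (Real.exp (-(J t)) * (-(M t))) t :=
      ((hJ t).neg).exp
    have hmul := (hderiv t ht).mul hexp
    refine hmul.congr_deriv ?_
    have hgce := hgc_eq t ht
    simp only [hM_def, hgce]
    ring
  have hH_anti : AntitoneOn H (Set.Icc 0 T) := by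
    apply antitoneOn_of_deriv_nonpos (convex_Icc 0 T) hH_cont
    · intro t ht
      rw [interior_Icc] at ht
      exact (hH_deriv t (Set.mem_Icc_of_Ioo ht)).differentiableAt.differentiableWithinAt
    · intro t ht
      rw [interior_Icc] at ht
      rw [(hH_deriv t (Set.mem_Icc_of_Ioo ht)).deriv]
      have := Real.exp_pos (-(J t))
      nlinarith
  have hlower : ∀ t ∈ Set.Icc (0:ℝ) T, 0 ≤ g₃ t := by
    intro t ht
    have hHT : H T = 0 := by simp [hH_def, hterm]
    have h1 : H T ≤ H t := hH_anti ht (Set.right_mem_Icc.mpr hT.le) ht.2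
    rw [hHT] at h1
    have h2 : 0 ≤ g₃ t * Real.exp (-(J t)) := h1
    nlinarith [Real.exp_pos (-(J t))]
  ------------------------------------------------------------------
  intro t ht
  exact ⟨hlower t ht, lt_of_le_of_lt (hupper t ht) horder⟩
end
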